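/- Let (X, d_X) be a metric space satisfying the infrasup p-umbel inequality with constant C_U ≥ 1 for some p ≥ 1. Then there exists C > 0, depending only on p and C_U, such that for every h ≥ 2 and every map f: [ℕ]^{≤h} → X satisfying λ·d_T(m̄,n̄) ≤ d_X(f(m̄),f(n̄)) ≤ K·λ·d_T(m̄,n̄) for all m̄,n̄ (for some λ > 0 and K ≥ 1), one has K ≥ C·(log₂ h)^{1/p}. -/

import Mathlib

open scoped ENNReal

/-- A metric space `(X,d)` satisfies the infrasup `p`-umbel inequality with constant
`C_U > 0` if for all `w, z ∈ X` and every sequence `(x_n)` in `X`: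
`(1/2^p)·inf_n d(w,x_n)^p + (1/C_U^p)·inf_{i≠j} d(x_i,x_j)^p
  ≤ max { d(w,z)^p , sup_n d(x_n,z)^p }`. -/
def InfrasupUmbel (X : Type*) [PseudoMetricSpace X] (p C_U : ℝ) : Prop :=
  ∀ (w z : X) (x : ℕ → X),
    (1 / (2 : ℝ≥0∞) ^ p) * (⨅ n : ℕ, edist w (x n) ^ p)
      + (1 / ENNReal.ofReal C_U ^ p) * (⨅ (i : ℕ) (j : ℕ) (_ : i ≠ j), edist (x i) (x j) ^ p)
      ≤ max (edist w z ^ p) (⨆ n : ℕ, edist (x n) z ^ p)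

/-- Length of the longest common initial segment of two lists. -/
def lcp : List ℕ → List ℕ → ℕ
  | a :: as, b :: bs => if a = b then lcp as bs + 1 else 0
  | _, _ => 0

/-- The tree metric on the countably branching tree (encoded as strictly increasing lists):
`d_T(m̄,n̄) = (|m̄| − |ū|) + (|n̄| − |ū|)` where `ū` is the longest common initial segment. -/
def treeDist (m n : List ℕ) : ℕ := (m.length - lcp m n) + (n.length - lcp m n)

lemma lcp_nil_left (y : List ℕ) : lcp [] y = 0 := by cases y <;> rfl

lemma lcp_append (l x y : List ℕ) : lcp (l ++ x) (l ++ y) = l.length + lcp x y := by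
  induction l with
  | nil => simp
  | cons a as ih => simp [lcp, ih]; omega

lemma lcp_cons_ne {a b : ℕ} (hab : a ≠ b) (x y : List ℕ) : lcp (a :: x) (b :: y) = 0 := by
  simp [lcp, hab]

lemma le_foldr_max (r : List ℕ) : ∀ a ∈ r, a ≤ r.foldr max 0 := by
  induction r with
  | nil => simp
  | cons b bs ih =>
    intro a ha
    rcases List.mem_cons.mp ha with rfl | ha
    · simp
    · exact le_trans (ih a ha) (by simp)

lemma chain'_append_singleton {r : List ℕ} (hr : List.Chain' (· < ·) r) {c : ℕ}
    (hc : r.foldr max 0 < c) : List.Chain' (· < ·) (r ++ [c]) := by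
  rw [List.Chain', List.isChain_append]
  refine ⟨hr, List.isChain_singleton _, ?_⟩
  intro x hx y hy
  simp at hy
  subst hy
  have hxr : x ∈ r := List.mem_of_mem_getLast? hx
  exact lt_of_le_of_lt (le_foldr_max r x hxr) hc

theorem stable_exists {X : Type*} [MetricSpace X] (f : List ℕ → X) (h : ℕ) (bound : ℝ)
    (hbound : ∀ u v : List ℕ, List.Chain' (· < ·) u → List.Chain' (· < ·) v →
      u.length ≤ h → v.length ≤ h → dist (f u) (f v) ≤ bound) :
    ∀ (H : ℕ) (δ : ℝ), 0 < δ → ∀ r : List ℕ, List.Chain' (· < ·) r → r.length + H ≤ h →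
    ∀ Z : List (List ℕ), (∀ z ∈ Z, List.Chain' (· < ·) z ∧ z.length ≤ h) →
    ∃ σ : List ℕ → List ℕ,
      σ [] = r ∧
      (∀ s u : List ℕ, (s ++ u).length ≤ H → σ s <+: σ (s ++ u)) ∧
      (∀ s : List ℕ, s.length ≤ H → (σ s).length = r.length + s.length) ∧
      (∀ s : List ℕ, s.length ≤ H → List.Chain' (· < ·) (σ s)) ∧
      (∀ (s : List ℕ) (n₁ n₂ : ℕ) (u₁ u₂ : List ℕ), n₁ ≠ n₂ →
        (s ++ n₁ :: u₁).length ≤ H → (s ++ n₂ :: u₂).length ≤ H →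
        lcp (σ (s ++ n₁ :: u₁)) (σ (s ++ n₂ :: u₂)) = (σ s).length) ∧
      (∀ s u₁ u₂ : List ℕ, u₁.length = u₂.length →
        (s ++ u₁).length ≤ H → (s ++ u₂).length ≤ H →
        |dist (f (σ (s ++ u₁))) (f (σ s)) - dist (f (σ (s ++ u₂))) (f (σ s))| ≤ δ) ∧
      (∀ z ∈ Z, ∀ s₁ s₂ : List ℕ, s₁.length = s₂.length →
        s₁.length ≤ H → s₂.length ≤ H →
        |dist (f z) (f (σ s₁)) - dist (f z) (f (σ s₂))| ≤ δ) := by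
  intro H
  induction H with
  | zero =>
    intro δ hδ r hr hlen Z hZ
    refine ⟨fun _ => r, rfl, fun s u _ => List.prefix_refl _, ?_, fun _ _ => hr, ?_, ?_, ?_⟩
    · intro s hs
      have : s = [] := List.length_eq_zero_iff.mp (Nat.le_zero.mp hs)
      simp [this]
    · intro s n₁ n₂ u₁ u₂ _ h1 _
      exfalso; simp at h1
    · intro s u₁ u₂ _ _ _; simpa using le_of_lt hδ
    · intro z _ s₁ s₂ _ _ _; simpa using le_of_lt hδ
  | succ H IH =>
    intro δ hδ r hr hlen Z hZ
    set mx := r.foldr max 0 with hmx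
    -- children
    set child : ℕ → List ℕ := fun i => r ++ [mx + 1 + i] with hchild
    have chain_child : ∀ i, List.Chain' (· < ·) (child i) := by
      intro i; exact chain'_append_singleton hr (by omega)
    have len_child : ∀ i, (child i).length = r.length + 1 := by intro i; simp [hchild]
    have hrh : r.length ≤ h := by omega
    have F : ∀ i : ℕ, _ := fun i : ℕ =>
      IH (δ/3) (by linarith) (child i) (chain_child i)
        (by rw [len_child]; omega) (r :: Z)
        (by
          intro z hz
          rcases List.mem_cons.mp hz with rfl | hz
          · exact ⟨hr, hrh⟩
          · exact hZ z hz)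
    choose σc P0c Pprec Plenc Pchainc Plcpc Pstabc Prefc using F
    -- validity of points in the children subtrees
    have valid_c : ∀ (i : ℕ) (s : List ℕ), s.length ≤ H →
        List.Chain' (· < ·) (σc i s) ∧ (σc i s).length ≤ h := by
      intro i s hs
      refine ⟨Pchainc i s hs, ?_⟩
      rw [Plenc i s hs, len_child]; omega
    -- reference points
    set zref : Fin (Z.length + 1) → List ℕ := fun j =>
      if hj : (j : ℕ) < Z.length then Z.get ⟨j, hj⟩ else r with hzref
    have zref_valid : ∀ j, List.Chain' (· < ·) (zref j) ∧ (zref j).length ≤ h := by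
      intro j
      by_cases hj : (j : ℕ) < Z.length
      · simp only [hzref, dif_pos hj]; exact hZ _ (Z.get_mem _)
      · simp only [hzref, dif_neg hj]; exact ⟨hr, hrh⟩
    -- the value vectors
    set val : ℕ → (Fin (Z.length + 1) × Fin (H + 1)) → ℝ := fun i zm =>
      dist (f (zref zm.1)) (f (σc i (List.replicate (zm.2 : ℕ) 0))) with hval
    have hbound0 : (0:ℝ) ≤ bound := le_trans dist_nonneg
      (hbound r r hr hr hrh hrh)
    have hmem : ∀ i, val i ∈ Metric.closedBall (0 : (Fin (Z.length + 1) × Fin (H + 1)) → ℝ) bound := by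
      intro i
      rw [Metric.mem_closedBall, dist_pi_le_iff hbound0]
      intro zm
      have hc := valid_c i (List.replicate (zm.2 : ℕ) 0)
        (by simp; omega)
      have hz := zref_valid zm.1
      simp only [Pi.zero_apply, Real.dist_eq, sub_zero, hval]
      rw [abs_of_nonneg dist_nonneg]
      exact hbound _ _ hz.1 hc.1 hz.2 hc.2
    obtain ⟨L, _, φ, hφ, hconv⟩ :=
      (isCompact_closedBall (0 : (Fin (Z.length + 1) × Fin (H + 1)) → ℝ) bound).tendsto_subseq hmem
    obtain ⟨N, hN⟩ := Metric.cauchySeq_iff.mp hconv.cauchySeq (δ/3) (by linarith)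
    set sel : ℕ → ℕ := fun n => φ (N + n) with hsel
    have sel_inj : Function.Injective sel := by
      intro a b hab
      have := hφ.injective hab
      omega
    have key : ∀ (n n' : ℕ) (zm : Fin (Z.length + 1) × Fin (H + 1)),
        |val (sel n) zm - val (sel n') zm| ≤ δ/3 := by
      intro n n' zm
      have h1 := hN (N + n) (by omega) (N + n') (by omega)
      have h2 := dist_le_pi_dist (val (sel n)) (val (sel n')) zm
      rw [Real.dist_eq] at h2
      calc |val (sel n) zm - val (sel n') zm| ≤ dist ((val ∘ φ) (N+n)) ((val ∘ φ) (N+n')) := h2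
        _ ≤ δ/3 := le_of_lt h1
    have keyr : ∀ (n n' m : ℕ), m ≤ H →
        |dist (f r) (f (σc (sel n) (List.replicate m 0))) -
         dist (f r) (f (σc (sel n') (List.replicate m 0)))| ≤ δ/3 := by
      intro n n' m hm
      have := key n n' (⟨Z.length, by omega⟩, ⟨m, by omega⟩)
      simpa [hval, hzref] using this
    have keyz : ∀ (z : List ℕ) (i : ℕ) (hi : i < Z.length), Z.get ⟨i, hi⟩ = z →
        ∀ (n n' m : ℕ), m ≤ H →
        |dist (f z) (f (σc (sel n) (List.replicate m 0))) -
         dist (f z) (f (σc (sel n') (List.replicate m 0)))| ≤ δ/3 := by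
      intro z i hi hzi n n' m hm
      have := key n n' (⟨i, by omega⟩, ⟨m, by omega⟩)
      simp only [hval] at this
      have hzi' : Z[i] = z := hzi
      simpa [hzref, dif_pos hi, hzi'] using this
    refine ⟨fun s => match s with | [] => r | n :: s' => σc (sel n) s', rfl, ?_, ?_, ?_, ?_, ?_, ?_⟩
    · -- prefix
      intro s u hlen2
      match s with
      | [] =>
        match u with
        | [] => exact List.prefix_refl _
        | n :: u' =>
          have h1 : child (sel n) <+: σc (sel n) u' := by
            have := Pprec (sel n) [] u' (by simp at hlen2 ⊢; omega)
            rwa [List.nil_append, P0c] at this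
          have h2 : r <+: child (sel n) := ⟨[mx + 1 + sel n], rfl⟩
          exact h2.trans h1
      | n :: s' =>
        show σc (sel n) s' <+: σc (sel n) (s' ++ u)
        exact Pprec (sel n) s' u (by simp at hlen2 ⊢; omega)
    · -- length
      intro s hs
      match s with
      | [] => simp
      | n :: s' =>
        show (σc (sel n) s').length = _
        rw [Plenc (sel n) s' (by simp at hs; omega), len_child]
        simp; omega
    · -- chain
      intro s hs
      match s with
      | [] => exact hr
      | n :: s' => exact Pchainc (sel n) s' (by simp at hs; omega)
    · -- lcp
      intro s n₁ n₂ u₁ u₂ hne hl1 hl2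
      match s with
      | [] =>
        show lcp (σc (sel n₁) u₁) (σc (sel n₂) u₂) = r.length
        have pre1 : child (sel n₁) <+: σc (sel n₁) u₁ := by
          have := Pprec (sel n₁) [] u₁ (by simp at hl1 ⊢; omega)
          rwa [List.nil_append, P0c] at this
        have pre2 : child (sel n₂) <+: σc (sel n₂) u₂ := by
          have := Pprec (sel n₂) [] u₂ (by simp at hl2 ⊢; omega)
          rwa [List.nil_append, P0c] at this
        obtain ⟨w₁, hw₁⟩ := pre1
        obtain ⟨w₂, hw₂⟩ := pre2
        rw [← hw₁, ← hw₂, hchild]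
        simp only [List.append_assoc, List.singleton_append]
        rw [lcp_append]
        rw [lcp_cons_ne (by intro hc; exact hne (sel_inj (by omega)))]
        simp
      | n :: s' =>
        show lcp (σc (sel n) (s' ++ n₁ :: u₁)) (σc (sel n) (s' ++ n₂ :: u₂)) = (σc (sel n) s').length
        exact Plcpc (sel n) s' n₁ n₂ u₁ u₂ hne (by simp at hl1 ⊢; omega) (by simp at hl2 ⊢; omega)
    · -- stab
      intro s u₁ u₂ hlu hl1 hl2
      match s with
      | [] =>
        match u₁, u₂ with
        | [], u₂ =>
          have : u₂ = [] := List.length_eq_zero_iff.mp (by simp at hlu; omega)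
          subst this
          simpa using le_of_lt hδ
        | n₁ :: u₁', [] => exfalso; simp at hlu
        | n₁ :: u₁', n₂ :: u₂' =>
          show |dist (f (σc (sel n₁) u₁')) (f r) - dist (f (σc (sel n₂) u₂')) (f r)| ≤ δ
          have hu1 : u₁'.length ≤ H := by simp at hl1; omega
          have hu2 : u₂'.length ≤ H := by simp at hl2; omega
          set m' : ℕ := u₁'.length with hm'
          have a₁ : |dist (f r) (f (σc (sel n₁) u₁')) -
              dist (f r) (f (σc (sel n₁) (List.replicate m' 0)))| ≤ δ/3 :=
            Prefc (sel n₁) r List.mem_cons_self u₁' (List.replicate m' 0)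
              (by simp [hm']) hu1 (by simp; omega)
          have a₃ : |dist (f r) (f (σc (sel n₂) u₂')) -
              dist (f r) (f (σc (sel n₂) (List.replicate m' 0)))| ≤ δ/3 :=
            Prefc (sel n₂) r List.mem_cons_self u₂' (List.replicate m' 0)
              (by simp at hlu ⊢; omega) hu2 (by simp; omega)
          have a₂ := keyr n₁ n₂ m' hu1
          rw [dist_comm (f (σc (sel n₁) u₁')) (f r), dist_comm (f (σc (sel n₂) u₂')) (f r)]
          have h4 := abs_sub_le (dist (f r) (f (σc (sel n₁) u₁')))
            (dist (f r) (f (σc (sel n₁) (List.replicate m' 0))))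
            (dist (f r) (f (σc (sel n₂) u₂')))
          have h5 := abs_sub_le (dist (f r) (f (σc (sel n₁) (List.replicate m' 0))))
            (dist (f r) (f (σc (sel n₂) (List.replicate m' 0))))
            (dist (f r) (f (σc (sel n₂) u₂')))
          have h6 := abs_sub_comm (dist (f r) (f (σc (sel n₂) (List.replicate m' 0))))
            (dist (f r) (f (σc (sel n₂) u₂')))
          linarith
      | n :: s' =>
        show |dist (f (σc (sel n) (s' ++ u₁))) (f (σc (sel n) s')) -
            dist (f (σc (sel n) (s' ++ u₂))) (f (σc (sel n) s'))| ≤ δ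
        have := Pstabc (sel n) s' u₁ u₂ hlu (by simp at hl1 ⊢; omega) (by simp at hl2 ⊢; omega)
        linarith
    · -- ref
      intro z hz s₁ s₂ hl hs1 hs2
      match s₁, s₂ with
      | [], s₂ =>
        have : s₂ = [] := List.length_eq_zero_iff.mp (by simp at hl; omega)
        subst this
        simpa using le_of_lt hδ
      | n₁ :: s₁', [] => exfalso; simp at hl
      | n₁ :: s₁', n₂ :: s₂' =>
        show |dist (f z) (f (σc (sel n₁) s₁')) - dist (f z) (f (σc (sel n₂) s₂'))| ≤ δ
        have hu1 : s₁'.length ≤ H := by simp at hs1; omega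
        have hu2 : s₂'.length ≤ H := by simp at hs2; omega
        set m' : ℕ := s₁'.length with hm'
        obtain ⟨⟨i, hi⟩, hzi⟩ := List.mem_iff_get.mp hz
        have a₁ : |dist (f z) (f (σc (sel n₁) s₁')) -
            dist (f z) (f (σc (sel n₁) (List.replicate m' 0)))| ≤ δ/3 :=
          Prefc (sel n₁) z (List.mem_cons_of_mem _ hz) s₁' (List.replicate m' 0)
            (by simp [hm']) hu1 (by simp; omega)
        have a₃ : |dist (f z) (f (σc (sel n₂) s₂')) -
            dist (f z) (f (σc (sel n₂) (List.replicate m' 0)))| ≤ δ/3 :=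
          Prefc (sel n₂) z (List.mem_cons_of_mem _ hz) s₂' (List.replicate m' 0)
            (by simp at hl ⊢; omega) hu2 (by simp; omega)
        have a₂ := keyz z i hi hzi n₁ n₂ m' hu1
        have h4 := abs_sub_le (dist (f z) (f (σc (sel n₁) s₁')))
          (dist (f z) (f (σc (sel n₁) (List.replicate m' 0))))
          (dist (f z) (f (σc (sel n₂) s₂')))
        have h5 := abs_sub_le (dist (f z) (f (σc (sel n₁) (List.replicate m' 0))))
          (dist (f z) (f (σc (sel n₂) (List.replicate m' 0))))
          (dist (f z) (f (σc (sel n₂) s₂')))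
        have h6 := abs_sub_comm (dist (f z) (f (σc (sel n₂) (List.replicate m' 0))))
          (dist (f z) (f (σc (sel n₂) s₂')))
        linarith


lemma lcp_self_append (l w : List ℕ) : lcp l (l ++ w) = l.length := by
  have := lcp_append l [] w
  simpa [lcp_nil_left] using this

lemma treeDist_self_append (l w : List ℕ) : treeDist l (l ++ w) = w.length := by
  simp [treeDist, lcp_self_append]

lemma treeDist_le (m n : List ℕ) : treeDist m n ≤ m.length + n.length := by
  unfold treeDist; omega



lemma umbel_real {X : Type*} [MetricSpace X] {p C_U : ℝ} (hp : 1 ≤ p) (hCU : 1 ≤ C_U)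
    (hU : InfrasupUmbel X p C_U) (w z : X) (x : ℕ → X)
    {a b c : ℝ} (ha : 0 ≤ a) (hb : 0 ≤ b) (hc : 0 ≤ c)
    (hwa : ∀ n, a ≤ dist w (x n))
    (hbx : ∀ i j, i ≠ j → b ≤ dist (x i) (x j))
    (hwz : dist w z ≤ c)
    (hxz : ∀ n, dist (x n) z ≤ c) :
    (1/2^p) * a^p + (1/C_U^p) * b^p ≤ c^p := by
  have h0p : (0:ℝ) ≤ p := le_trans zero_le_one hp
  have hCU0 : (0:ℝ) < C_U := lt_of_lt_of_le zero_lt_one hCU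
  have e1 : ENNReal.ofReal ((1/2^p) * a^p) = (1 / (2 : ℝ≥0∞) ^ p) * (ENNReal.ofReal a) ^ p := by
    rw [ENNReal.ofReal_mul (by positivity), ← ENNReal.ofReal_rpow_of_nonneg ha h0p]
    congr 1
    rw [one_div, one_div, ENNReal.ofReal_inv_of_pos (by positivity),
      ← ENNReal.ofReal_rpow_of_pos (by norm_num : (0:ℝ) < 2)]
    norm_num
  have e2 : ENNReal.ofReal ((1/C_U^p) * b^p)
      = (1 / ENNReal.ofReal C_U ^ p) * (ENNReal.ofReal b) ^ p := by
    rw [ENNReal.ofReal_mul (by positivity), ← ENNReal.ofReal_rpow_of_nonneg hb h0p]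
    congr 1
    rw [one_div, one_div, ENNReal.ofReal_inv_of_pos (by positivity),
      ← ENNReal.ofReal_rpow_of_pos hCU0]
  have l1 : ENNReal.ofReal ((1/2^p) * a^p + (1/C_U^p) * b^p)
      ≤ max (edist w z ^ p) (⨆ n : ℕ, edist (x n) z ^ p) := by
    rw [ENNReal.ofReal_add (by positivity) (by positivity), e1, e2]
    refine le_trans (add_le_add ?_ ?_) (hU w z x)
    · refine mul_le_mul_right (le_iInf fun n => ?_) _
      rw [edist_dist]
      exact ENNReal.rpow_le_rpow (ENNReal.ofReal_le_ofReal (hwa n)) h0p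
    · refine mul_le_mul_right (le_iInf fun i => le_iInf fun j => le_iInf fun hij => ?_) _
      rw [edist_dist]
      exact ENNReal.rpow_le_rpow (ENNReal.ofReal_le_ofReal (hbx i j hij)) h0p
  have l2 : max (edist w z ^ p) (⨆ n : ℕ, edist (x n) z ^ p) ≤ ENNReal.ofReal (c^p) := by
    rw [← ENNReal.ofReal_rpow_of_nonneg hc h0p]
    refine max_le ?_ (iSup_le fun n => ?_)
    · rw [edist_dist]
      exact ENNReal.rpow_le_rpow (ENNReal.ofReal_le_ofReal hwz) h0p
    · rw [edist_dist]
      exact ENNReal.rpow_le_rpow (ENNReal.ofReal_le_ofReal (hxz n)) h0p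
  have := le_trans l1 l2
  rwa [ENNReal.ofReal_le_ofReal_iff (by positivity)] at this


set_option maxHeartbeats 2000000 in
/-- **Lower Bound for Embedding of Countably Branching Trees.**
If `(X, d_X)` satisfies the infrasup `p`-umbel inequality with constant `C_U ≥ 1` for some
`p ≥ 1`, then there is `C > 0` depending only on `p` and `C_U` such that any bi-Lipschitz
embedding of the countably branching tree of height `h ≥ 2` into `X` with scaling `λ > 0`
and constant `K ≥ 1` satisfies `K ≥ C·(log₂ h)^{1/p}`. -/
theorem tree_embedding_obstruction.{u} (p C_U : ℝ) (hp : 1 ≤ p) (hCU : 1 ≤ C_U) :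
    ∃ C > (0 : ℝ), ∀ (X : Type u) [MetricSpace X], InfrasupUmbel X p C_U →
      ∀ h : ℕ, 2 ≤ h → ∀ f : List ℕ → X, ∀ lam K : ℝ, 0 < lam → 1 ≤ K →
        (∀ m n : List ℕ, List.Chain' (· < ·) m → List.Chain' (· < ·) n →
          m.length ≤ h → n.length ≤ h →
          lam * (treeDist m n : ℝ) ≤ dist (f m) (f n) ∧
          dist (f m) (f n) ≤ K * lam * (treeDist m n : ℝ)) →
        C * Real.logb 2 (h : ℝ) ^ (1 / p) ≤ K := by
  have hCU0 : (0:ℝ) < C_U := by linarith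
  refine ⟨1/(2*C_U), by positivity, ?_⟩
  intro X _ hU h hh f lam K hlam hK Hf
  have h0p : (0:ℝ) ≤ p := by linarith
  have hp0 : p ≠ 0 := by positivity
  have hK0 : (0:ℝ) < K := by linarith
  set k := Nat.log 2 h with hkdef
  have hk1 : 1 ≤ k := Nat.log_pos one_lt_two hh
  have h2k : 2 ^ k ≤ h := Nat.pow_log_le_self 2 (by omega)
  have hklt : h < 2 ^ (k + 1) := Nat.lt_pow_succ_log_self one_lt_two h
  -- The key quantitative estimate, for every small e > 0.
  have claimE : ∀ e : ℝ, 0 < e → e ≤ 1/4 →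
      (k:ℝ) * ((2/C_U)^p - K^p*((1+4*e)^p - 1)) ≤ K^p := by
    intro e he he4
    have hδ : (0:ℝ) < e * lam := by positivity
    have hbound : ∀ u v : List ℕ, List.Chain' (· < ·) u → List.Chain' (· < ·) v →
        u.length ≤ h → v.length ≤ h → dist (f u) (f v) ≤ K*lam*(2*h) := by
      intro u v hu hv hlu hlv
      have h1 := (Hf u v hu hv hlu hlv).2
      have h2 : (treeDist u v : ℝ) ≤ 2*h := by
        have := treeDist_le u v
        have : treeDist u v ≤ 2*h := by omega
        exact_mod_cast this
      nlinarith [mul_le_mul_of_nonneg_left h2 (show (0:ℝ) ≤ K*lam by positivity)]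
    obtain ⟨σ, P0, Ppre, Plen, Pchain, Plcp, Pstab, Pref⟩ :=
      stable_exists f h (K*lam*(2*h)) hbound (2^k) (e*lam) hδ [] List.isChain_nil
        (by simpa using h2k) [] (by simp)
    set V : ℕ → X := fun m => f (σ (List.replicate m 0)) with hV
    -- vertical distance estimates along the spine
    have vert : ∀ a b : ℕ, a ≤ b → b ≤ 2^k →
        lam * ((b:ℝ) - a) ≤ dist (V a) (V b) ∧ dist (V a) (V b) ≤ K * lam * ((b:ℝ) - a) := by
      intro a b hab hb
      have hrep : List.replicate b (0:ℕ) = List.replicate a 0 ++ List.replicate (b-a) 0 := by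
        rw [← List.replicate_add]; congr 1; omega
      have hpre := Ppre (List.replicate a 0) (List.replicate (b-a) 0) (by simp; omega)
      rw [← hrep] at hpre
      obtain ⟨w, hw⟩ := hpre
      have l1 : (σ (List.replicate a 0)).length = a := by
        have := Plen (List.replicate a 0) (by simp; omega); simpa using this
      have l2 : (σ (List.replicate b 0)).length = b := by
        have := Plen (List.replicate b 0) (by simp; omega); simpa using this
      have hwlen : w.length = b - a := by
        have := congrArg List.length hw
        rw [List.length_append, l1] at this
        rw [l2] at this
        omega
      have htd : treeDist (σ (List.replicate a 0)) (σ (List.replicate b 0)) = b - a := by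
        rw [← hw, treeDist_self_append, hwlen]
      have hfa := Hf (σ (List.replicate a 0)) (σ (List.replicate b 0))
        (Pchain _ (by simp; omega)) (Pchain _ (by simp; omega))
        (by rw [l1]; omega) (by rw [l2]; omega)
      rw [htd] at hfa
      have hcast : ((b - a : ℕ) : ℝ) = (b:ℝ) - a := by
        rw [Nat.cast_sub hab]
      rw [hcast] at hfa
      exact hfa
    have hne : ∀ j : ℕ, (Finset.range (2^(k-j))).Nonempty :=
      fun j => Finset.nonempty_range_iff.mpr (by positivity)
    set Ψ : ℕ → ℝ := fun j => (Finset.range (2^(k-j))).sup' (hne j)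
      (fun i => dist (V (i*2^j)) (V ((i+1)*2^j))) with hΨ
    have hidx : ∀ j i : ℕ, j ≤ k → i < 2^(k-j) → (i+1)*2^j ≤ 2^k := by
      intro j i hj hi
      calc (i+1)*2^j ≤ 2^(k-j)*2^j := Nat.mul_le_mul_right _ hi
        _ = 2^k := by rw [← pow_add]; congr 1; omega
    have pair_le : ∀ j i : ℕ, i < 2^(k-j) → dist (V (i*2^j)) (V ((i+1)*2^j)) ≤ Ψ j := by
      intro j i hi
      simp only [hΨ]
      exact Finset.le_sup' (fun i => dist (V (i*2^j)) (V ((i+1)*2^j))) (Finset.mem_range.mpr hi)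
    have Ψ_ub : ∀ j, j ≤ k → Ψ j ≤ K * (lam * 2^j) := by
      intro j hj
      simp only [hΨ]
      refine Finset.sup'_le _ _ fun i hi => ?_
      have hi' := Finset.mem_range.mp hi
      have hv := (vert (i*2^j) ((i+1)*2^j) (by nlinarith [Nat.one_le_two_pow (n := j)]) (hidx j i hj hi')).2
      have hcast : (((i+1)*2^j : ℕ) : ℝ) - ((i*2^j : ℕ) : ℝ) = 2^j := by push_cast; ring
      rw [hcast] at hv
      calc dist (V (i*2^j)) (V ((i+1)*2^j)) ≤ K * lam * 2^j := hv
        _ = K * (lam * 2^j) := by ring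
    have Ψ_lb : ∀ j, j ≤ k → lam * 2^j ≤ Ψ j := by
      intro j hj
      have h0 : (0:ℕ) < 2^(k-j) := by positivity
      have hle := pair_le j 0 h0
      have hv := (vert (0*2^j) ((0+1)*2^j) (by omega) (hidx j 0 hj h0)).1
      have hcast : (((0+1)*2^j : ℕ) : ℝ) - ((0*2^j : ℕ) : ℝ) = 2^j := by push_cast; ring
      rw [hcast] at hv
      linarith
    -- the umbel step at scale j
    have step : ∀ j, j < k →
        (1/2^p) * (Ψ (j+1) - e*lam)^p + (1/C_U^p) * (lam*2^(j+1))^p ≤ (Ψ j + e*lam)^p := by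
      intro j hjk
      have h2j : (1:ℕ) ≤ 2^j := Nat.one_le_two_pow
      have hpow : (2:ℕ)^(j+1) = 2^j + 2^j := by rw [pow_succ]; omega
      have hkj : (2:ℕ)^(k-j) = 2^(k-(j+1)) + 2^(k-(j+1)) := by
        have h1 : k - j = (k-(j+1))+1 := by omega
        rw [h1, pow_succ]; omega
      obtain ⟨i, hi, hEq0⟩ := Finset.exists_mem_eq_sup' (hne (j+1))
        (fun i => dist (V (i*2^(j+1))) (V ((i+1)*2^(j+1))))
      have hEq : Ψ (j+1) = dist (V (i*2^(j+1))) (V ((i+1)*2^(j+1))) := by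
        simp only [hΨ]; exact hEq0
      have hik : i < 2^(k-(j+1)) := Finset.mem_range.mp hi
      have hsucc : (i+1)*2^(j+1) = i*2^(j+1) + 2^(j+1) := by rw [Nat.succ_mul]
      rw [hsucc] at hEq
      set a := i*2^(j+1) with ha
      set m := a + 2^j with hm
      have hm2k : m + 2^j ≤ 2^k := by
        have := hidx (j+1) i (by omega) hik
        rw [hsucc] at this
        omega
      -- the spine bottom point and the fan
      have hlist0 : List.replicate m (0:ℕ) ++ 0 :: List.replicate (2^j-1) 0
          = List.replicate (a + 2^(j+1)) 0 := by
        rw [show (0:ℕ) :: List.replicate (2^j-1) 0 = List.replicate (2^j-1+1) 0 from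
          List.replicate_succ.symm, ← List.replicate_add]
        congr 1
        omega
      -- bound (f2) : distance from V a to fan points is ≥ Ψ (j+1) - e*lam
      have f2 : ∀ n : ℕ, Ψ (j+1) - e*lam ≤
          dist (V a) (f (σ (List.replicate m 0 ++ n :: List.replicate (2^j-1) 0))) := by
        intro n
        have hs := Pstab (List.replicate a 0)
          (List.replicate (2^j) 0 ++ n :: List.replicate (2^j-1) 0)
          (List.replicate (2^(j+1)) 0)
          (by simp; omega) (by simp; omega) (by simp; omega)
        rw [show List.replicate a (0:ℕ) ++ (List.replicate (2^j) 0 ++ n :: List.replicate (2^j-1) 0)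
            = List.replicate m 0 ++ n :: List.replicate (2^j-1) 0 from by
          rw [← List.append_assoc, ← List.replicate_add]] at hs
        rw [show List.replicate a (0:ℕ) ++ List.replicate (2^(j+1)) 0
            = List.replicate (a + 2^(j+1)) 0 from by rw [← List.replicate_add]] at hs
        have habs := abs_le.mp hs
        have hEq' : dist (f (σ (List.replicate (a + 2^(j+1)) 0))) (f (σ (List.replicate a 0)))
            = Ψ (j+1) := by
          rw [dist_comm]; exact hEq.symm
        rw [hEq'] at hs
        have := abs_le.mp hs
        rw [dist_comm]
        linarith [this.1]
      -- bound (f3) : fan points are pairwise lam*2^(j+1) separated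
      have f3 : ∀ n n' : ℕ, n ≠ n' → lam * 2^(j+1) ≤
          dist (f (σ (List.replicate m 0 ++ n :: List.replicate (2^j-1) 0)))
               (f (σ (List.replicate m 0 ++ n' :: List.replicate (2^j-1) 0))) := by
        intro n n' hnn
        have hlcp := Plcp (List.replicate m 0) n n' (List.replicate (2^j-1) 0)
          (List.replicate (2^j-1) 0) hnn (by simp; omega) (by simp; omega)
        have hlm : (σ (List.replicate m 0)).length = m := by
          have := Plen (List.replicate m 0) (by simp; omega); simpa using this
        have hl1 : (σ (List.replicate m 0 ++ n :: List.replicate (2^j-1) 0)).length = m + 2^j := by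
          have := Plen (List.replicate m 0 ++ n :: List.replicate (2^j-1) 0) (by simp; omega)
          simp at this
          omega
        have hl2 : (σ (List.replicate m 0 ++ n' :: List.replicate (2^j-1) 0)).length = m + 2^j := by
          have := Plen (List.replicate m 0 ++ n' :: List.replicate (2^j-1) 0) (by simp; omega)
          simp at this
          omega
        have htd : treeDist (σ (List.replicate m 0 ++ n :: List.replicate (2^j-1) 0))
            (σ (List.replicate m 0 ++ n' :: List.replicate (2^j-1) 0)) = 2^(j+1) := by
          unfold treeDist
          rw [hlcp, hlm, hl1, hl2]
          omega
        have hfa := (Hf (σ (List.replicate m 0 ++ n :: List.replicate (2^j-1) 0))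
          (σ (List.replicate m 0 ++ n' :: List.replicate (2^j-1) 0))
          (Pchain _ (by simp; omega)) (Pchain _ (by simp; omega))
          (by rw [hl1]; omega) (by rw [hl2]; omega)).1
        rw [htd] at hfa
        have : ((2^(j+1) : ℕ) : ℝ) = 2^(j+1) := by push_cast; ring
        rw [this] at hfa
        exact hfa
      -- bound (f4) : dist (V a) (V m) ≤ Ψ j
      have e1 : (2*i)*2^j = a := by rw [ha, pow_succ]; ring
      have e2 : (2*i+1)*2^j = m := by rw [hm, ha, pow_succ]; ring
      have e3 : (2*i+1+1)*2^j = m + 2^j := by rw [hm, ha, pow_succ]; ring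
      have f4 : dist (V a) (V m) ≤ Ψ j := by
        have := pair_le j (2*i) (by omega)
        rwa [e1, e2] at this
      have f4' : dist (V m) (V (m + 2^j)) ≤ Ψ j := by
        have := pair_le j (2*i+1) (by omega)
        rwa [e2, e3] at this
      -- bound (f5) : fan points are close to V m
      have f5 : ∀ n : ℕ, dist (f (σ (List.replicate m 0 ++ n :: List.replicate (2^j-1) 0))) (V m)
          ≤ Ψ j + e*lam := by
        intro n
        have hs := Pstab (List.replicate m 0) (n :: List.replicate (2^j-1) 0)
          (List.replicate (2^j) 0) (by simp; omega) (by simp; omega) (by simp; omega)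
        rw [show List.replicate m (0:ℕ) ++ List.replicate (2^j) 0
            = List.replicate (m + 2^j) 0 from by rw [← List.replicate_add]] at hs
        have := abs_le.mp hs
        have h2 : dist (f (σ (List.replicate (m + 2^j) 0))) (f (σ (List.replicate m 0))) ≤ Ψ j := by
          rw [dist_comm]; exact f4'
        linarith [this.1]
      -- apply the umbel inequality
      have hΨlb' : lam * 2^(j+1) ≤ Ψ (j+1) := Ψ_lb (j+1) (by omega)
      have h2j1 : (1:ℝ) ≤ 2^(j+1) := one_le_pow₀ one_le_two
      refine umbel_real hp hCU hU (V a) (V m)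
        (fun n => f (σ (List.replicate m 0 ++ n :: List.replicate (2^j-1) 0)))
        ?_ (by positivity) ?_ f2 f3 (le_trans f4 (by nlinarith)) f5
      · nlinarith
      · nlinarith [Ψ_lb j (by omega), pow_pos (by norm_num : (0:ℝ) < 2) j]
    -- normalize and telescope
    set c := (2/C_U)^p with hc
    set q := (1+4*e)^p with hq
    have hq1 : (1:ℝ) ≤ q := by
      have h1 : (1:ℝ)^p ≤ (1+4*e)^p := Real.rpow_le_rpow zero_le_one (by linarith) h0p
      rw [Real.one_rpow] at h1
      rw [hq]; exact h1
    have hψ1 : ∀ j, j ≤ k → 1 ≤ Ψ j / (lam*2^j) := by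
      intro j hj
      rw [le_div_iff₀ (by positivity)]
      simpa using Ψ_lb j hj
    have hψK : ∀ j, j ≤ k → Ψ j / (lam*2^j) ≤ K := by
      intro j hj
      rw [div_le_iff₀ (by positivity)]
      simpa [mul_comm, mul_assoc] using Ψ_ub j hj
    have gK : ∀ j, j ≤ k → (Ψ j / (lam*2^j) - e)^p ≤ K^p := by
      intro j hj
      exact Real.rpow_le_rpow (by nlinarith [hψ1 j hj]) (by nlinarith [hψK j hj]) h0p
    have step' : ∀ j, j < k →
        (Ψ (j+1) / (lam*2^(j+1)) - e)^p + c ≤ (Ψ j / (lam*2^j) - e)^p * q := by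
      intro j hjk
      have ht : (0:ℝ) < lam * 2^j := by positivity
      have hT : lam * 2^(j+1) = 2*(lam*2^j) := by rw [pow_succ]; ring
      have hTpos : (0:ℝ) < lam * 2^(j+1) := by positivity
      have hstep := step j hjk
      set ψ' := Ψ (j+1) / (lam*2^(j+1)) with hψ'def
      set ψj := Ψ j / (lam*2^j) with hψjdef
      have hψ'1 : 1 ≤ ψ' := hψ1 (j+1) (by omega)
      have hψj1 : 1 ≤ ψj := hψ1 j (by omega)
      have hΨ'eq : Ψ (j+1) = ψ' * (lam*2^(j+1)) := by
        rw [hψ'def, div_mul_cancel₀]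
        positivity
      have hΨjeq : Ψ j = ψj * (lam*2^j) := by
        rw [hψjdef, div_mul_cancel₀]
        positivity
      -- lower bound for the first term
      have hA : (lam*2^(j+1)) * (ψ' - e) ≤ Ψ (j+1) - e*lam := by
        rw [hΨ'eq]
        have : lam ≤ lam*2^(j+1) := by nlinarith [one_le_pow₀ (one_le_two (α := ℝ)) (n := j+1)]
        nlinarith
      have hA0 : (0:ℝ) ≤ (lam*2^(j+1)) * (ψ' - e) := mul_nonneg (le_of_lt hTpos) (by linarith)
      have lhs1 : (lam*2^(j+1))^p * (ψ' - e)^p ≤ (Ψ (j+1) - e*lam)^p := by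
        rw [← Real.mul_rpow (le_of_lt hTpos) (by nlinarith)]
        exact Real.rpow_le_rpow hA0 hA h0p
      -- upper bound for the RHS
      have hB : Ψ j + e*lam ≤ (lam*2^j) * ((ψj - e)*(1+4*e)) := by
        rw [hΨjeq]
        have h1 : lam ≤ lam*2^j := by nlinarith [one_le_pow₀ (one_le_two (α := ℝ)) (n := j)]
        have h2 : ψj + e ≤ (ψj - e)*(1+4*e) := by
          nlinarith [mul_nonneg he.le (sub_nonneg.mpr hψj1),
            mul_nonneg he.le (by linarith : (0:ℝ) ≤ 1 - 2*e)]
        have h4 := mul_le_mul_of_nonneg_left h2 (le_of_lt ht)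
        nlinarith
      have hB0 : (0:ℝ) ≤ Ψ j + e*lam := by nlinarith [Ψ_lb j (le_of_lt hjk), pow_pos (by norm_num : (0:ℝ) < 2) j]
      have rhs1 : (Ψ j + e*lam)^p ≤ (lam*2^j)^p * ((ψj - e)^p * q) := by
        rw [hq, ← Real.mul_rpow (by nlinarith) (by linarith), ← Real.mul_rpow (le_of_lt ht) (by nlinarith)]
        exact Real.rpow_le_rpow hB0 hB h0p
      -- power identities
      have hTp : (lam*2^(j+1))^p = 2^p * (lam*2^j)^p := by
        rw [hT, Real.mul_rpow (by norm_num) (le_of_lt ht)]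
      have hcp : (1/C_U^p) * (lam*2^(j+1))^p = (lam*2^j)^p * c := by
        rw [hTp, hc, Real.div_rpow (by norm_num) (le_of_lt hCU0)]
        field_simp
      have h2p_pos : (0:ℝ) < (2:ℝ)^p := Real.rpow_pos_of_pos (by norm_num) p
      have key : (lam*2^j)^p * ((ψ' - e)^p + c) ≤ (lam*2^j)^p * ((ψj - e)^p * q) := by
        have expand : (1/2^p) * ((lam*2^(j+1))^p * (ψ' - e)^p) = (lam*2^j)^p * (ψ' - e)^p := by
          rw [hTp]; field_simp
        calc (lam*2^j)^p * ((ψ' - e)^p + c)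
            = (1/2^p) * ((lam*2^(j+1))^p * (ψ' - e)^p) + (lam*2^j)^p * c := by
              rw [expand]; ring
          _ ≤ (1/2^p) * (Ψ (j+1) - e*lam)^p + (lam*2^j)^p * c := by
              have := mul_le_mul_of_nonneg_left lhs1 (le_of_lt (by positivity : (0:ℝ) < 1/2^p))
              linarith
          _ = (1/2^p) * (Ψ (j+1) - e*lam)^p + (1/C_U^p) * (lam*2^(j+1))^p := by rw [hcp]
          _ ≤ (Ψ j + e*lam)^p := hstep
          _ ≤ (lam*2^j)^p * ((ψj - e)^p * q) := rhs1
      have htp_pos : (0:ℝ) < (lam*2^j)^p := Real.rpow_pos_of_pos ht p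
      exact le_of_mul_le_mul_left key htp_pos
    -- telescoping
    have tele : ∀ j, j ≤ k → (Ψ j / (lam*2^j) - e)^p + (j:ℝ)*(c - K^p*(q-1))
        ≤ (Ψ 0 / (lam*2^0) - e)^p := by
      intro j
      induction j with
      | zero => intro _; simp
      | succ j ih =>
        intro hjk
        have hj : j < k := by omega
        have h1 := step' j hj
        have h2 := gK j (by omega)
        have h3 : (Ψ j / (lam*2^j) - e)^p * q ≤ (Ψ j / (lam*2^j) - e)^p + K^p*(q-1) := by
          have h0 : (0:ℝ) ≤ (Ψ j / (lam*2^j) - e)^p := Real.rpow_nonneg (by nlinarith [hψ1 j (le_of_lt hj)]) p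
          nlinarith
        have h4 := ih (by omega)
        have hcast : ((j+1 : ℕ):ℝ) = (j:ℝ) + 1 := by push_cast; ring
        rw [hcast]
        linarith
    have tk := tele k (le_refl k)
    have hgk0 : (0:ℝ) ≤ (Ψ k / (lam*2^k) - e)^p := Real.rpow_nonneg (by nlinarith [hψ1 k (le_refl k)]) p
    have hg0K := gK 0 (by omega)
    rw [hc, hq]
    nlinarith [tk, hgk0, hg0K]
  -- pass to the limit e → 0⁺
  have main : (k:ℝ) * (2/C_U)^p ≤ K^p := by
    have hcont : ContinuousAt (fun e : ℝ => (k:ℝ)*((2/C_U)^p - K^p*((1+4*e)^p - 1))) 0 := by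
      have h1 : Continuous (fun e : ℝ => (1+4*e)) := by continuity
      have h2 : Continuous (fun e : ℝ => (1+4*e)^p) := h1.rpow_const (fun x => Or.inr h0p)
      exact (continuous_const.mul (continuous_const.sub
        (continuous_const.mul (h2.sub continuous_const)))).continuousAt
    have hval : (fun e : ℝ => (k:ℝ)*((2/C_U)^p - K^p*((1+4*e)^p - 1))) 0
        = (k:ℝ) * (2/C_U)^p := by
      norm_num [Real.one_rpow]
    have hlim : Filter.Tendsto (fun e : ℝ => (k:ℝ)*((2/C_U)^p - K^p*((1+4*e)^p - 1)))
        (nhdsWithin 0 (Set.Ioi 0)) (nhds ((k:ℝ) * (2/C_U)^p)) := by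
      rw [← hval]
      exact hcont.continuousWithinAt.tendsto
    refine le_of_tendsto hlim ?_
    filter_upwards [Ioc_mem_nhdsGT_of_mem (Set.left_mem_Ico.mpr (by norm_num : (0:ℝ) < 1/4))]
      with e he
    exact claimE e he.1 he.2
  -- final arithmetic
  have hlog0 : 0 ≤ Real.logb 2 (h:ℝ) := Real.logb_nonneg one_lt_two (by exact_mod_cast (by omega : 1 ≤ h))
  have hlog2k : Real.logb 2 (h:ℝ) ≤ 2*(k:ℝ) := by
    have hh1 : (h:ℝ) ≤ 2^(k+1) := by exact_mod_cast le_of_lt hklt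
    have hlog2 : (0:ℝ) < Real.log 2 := Real.log_pos (by norm_num)
    have h2 : Real.log (h:ℝ) ≤ Real.log (2^(k+1) : ℝ) :=
      Real.log_le_log (by exact_mod_cast (by omega : 0 < h)) hh1
    have h3 : Real.log ((2:ℝ)^(k+1)) = ((k:ℝ)+1) * Real.log 2 := by
      rw [Real.log_pow]; push_cast; ring
    rw [Real.logb, div_le_iff₀ hlog2]
    rw [h3] at h2
    have hk1' : (1:ℝ) ≤ (k:ℝ) := by exact_mod_cast hk1
    nlinarith
  have lhs_nn : (0:ℝ) ≤ 1/(2*C_U) * Real.logb 2 (h:ℝ) ^ (1/p) := by positivity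
  have hle : (1/(2*C_U) * Real.logb 2 (h:ℝ) ^ (1/p))^p ≤ K^p := by
    rw [Real.mul_rpow (by positivity) (Real.rpow_nonneg hlog0 _),
      ← Real.rpow_mul hlog0, one_div_mul_cancel hp0, Real.rpow_one]
    have b1 : (1/(2*C_U))^p * Real.logb 2 (h:ℝ) ≤ (1/(2*C_U))^p * (2*(k:ℝ)) :=
      mul_le_mul_of_nonneg_left hlog2k (Real.rpow_nonneg (by positivity) p)
    have hc2 : (2:ℝ) * ((1/(2*C_U))^p) ≤ (2/C_U)^p := by
      have hsplit : ((1:ℝ)/(2*C_U))^p = (1/2)^p * (1/C_U)^p := by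
        rw [← Real.mul_rpow (by norm_num) (by positivity)]
        congr 1
        field_simp
      have hsplit2 : ((2:ℝ)/C_U)^p = 2^p * (1/C_U)^p := by
        rw [← Real.mul_rpow (by norm_num) (by positivity)]
        congr 1
        field_simp
      have h12 : ((1:ℝ)/2)^p ≤ 1/2 := by
        calc ((1:ℝ)/2)^p ≤ (1/2)^(1:ℝ) :=
              Real.rpow_le_rpow_of_exponent_ge (by norm_num) (by norm_num) hp
          _ = 1/2 := Real.rpow_one _
      have h2p : (1:ℝ) ≤ 2^p := by
        calc (1:ℝ) = 2^(0:ℝ) := (Real.rpow_zero 2).symm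
          _ ≤ 2^p := Real.rpow_le_rpow_of_exponent_le one_le_two (by linarith)
      have hcu_nn : (0:ℝ) ≤ (1/C_U)^p := Real.rpow_nonneg (by positivity) p
      rw [hsplit, hsplit2]
      nlinarith
    have hkr : (0:ℝ) ≤ (k:ℝ) := Nat.cast_nonneg k
    calc (1/(2*C_U))^p * Real.logb 2 (h:ℝ) ≤ (1/(2*C_U))^p * (2*(k:ℝ)) := b1
      _ = (k:ℝ) * (2 * (1/(2*C_U))^p) := by ring
      _ ≤ (k:ℝ) * (2/C_U)^p := mul_le_mul_of_nonneg_left hc2 hkr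
      _ ≤ K^p := main
  calc 1/(2*C_U) * Real.logb 2 (h:ℝ) ^ (1/p)
      = ((1/(2*C_U) * Real.logb 2 (h:ℝ) ^ (1/p))^p)^(1/p) := by
        rw [← Real.rpow_mul lhs_nn, mul_one_div_cancel hp0, Real.rpow_one]
    _ ≤ (K^p)^(1/p) := Real.rpow_le_rpow (Real.rpow_nonneg lhs_nn p) hle (by positivity)
    _ = K := by
        rw [← Real.rpow_mul (le_of_lt hK0), mul_one_div_cancel hp0, Real.rpow_one]
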